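/- arXiv:1808.00318 — 3 statements merged into one kernel-verified Lean document; each statement's English description precedes it below -/
import Mathlib

section
/- Any 2×2 positive semidefinite matrix π satisfying the orthogonality-preserving conditions ⟨G_i|(I⊗I⊗π)|G_j⟩ = 0 for all distinct pairs i≠j from the eight three-qubit GHZ-basis states is a scalar multiple of the 2×2 identity matrix. -/
/-!
Pairing the first GHZ state `|000⟩ + |111⟩` with `(I ⊗ I ⊗ π)` applied to the next three,
`|000⟩ - |111⟩`, `|001⟩ ± |110⟩`, gives `π₀₀ - π₁₁`, `π₀₁ + π₁₀` and `π₀₁ - π₁₀`.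
Their vanishing forces `π = π₀₀ • 1`.
-/

open scoped BigOperators ComplexOrder

noncomputable section

def ket3q (a b c : Fin 2) : Fin 2 → Fin 2 → Fin 2 → ℂ :=
  fun i j k => if i = a ∧ j = b ∧ k = c then 1 else 0

def ghz : Fin 8 → (Fin 2 → Fin 2 → Fin 2 → ℂ) :=
  ![ket3q 0 0 0 + ket3q 1 1 1, ket3q 0 0 0 - ket3q 1 1 1,
    ket3q 0 0 1 + ket3q 1 1 0, ket3q 0 0 1 - ket3q 1 1 0,
    ket3q 0 1 0 + ket3q 1 0 1, ket3q 0 1 0 - ket3q 1 0 1,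
    ket3q 0 1 1 + ket3q 1 0 0, ket3q 0 1 1 - ket3q 1 0 0]

def ip3q (ψ φ : Fin 2 → Fin 2 → Fin 2 → ℂ) : ℂ :=
  ∑ i, ∑ j, ∑ k, star (ψ i j k) * φ i j k

/-- The state `(I ⊗ I ⊗ π) φ`. -/
def onThirdQubit (π : Matrix (Fin 2) (Fin 2) ℂ) (φ : Fin 2 → Fin 2 → Fin 2 → ℂ) :
    Fin 2 → Fin 2 → Fin 2 → ℂ :=
  fun i j k => ∑ k', π k k' * φ i j k'

section Sesquilinear

variable (ψ φ χ : Fin 2 → Fin 2 → Fin 2 → ℂ)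

lemma ip3q_add_left : ip3q (ψ + φ) χ = ip3q ψ χ + ip3q φ χ := by
  simp only [ip3q, Pi.add_apply, star_add, add_mul, Finset.sum_add_distrib]

lemma ip3q_add_right : ip3q ψ (φ + χ) = ip3q ψ φ + ip3q ψ χ := by
  simp only [ip3q, Pi.add_apply, mul_add, Finset.sum_add_distrib]

lemma ip3q_sub_right : ip3q ψ (φ - χ) = ip3q ψ φ - ip3q ψ χ := by
  simp only [ip3q, Pi.sub_apply, mul_sub, Finset.sum_sub_distrib]

lemma ip3q_ket3q_left (a b c : Fin 2) : ip3q (ket3q a b c) ψ = ψ a b c := by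
  simp only [ip3q, ket3q, ite_and, apply_ite star, star_one, star_zero, ite_mul, one_mul,
    zero_mul, Finset.sum_ite_irrel, Finset.sum_const_zero, Finset.sum_ite_eq', Finset.mem_univ,
    if_true]

end Sesquilinear

section OnThirdQubit

variable (π : Matrix (Fin 2) (Fin 2) ℂ)

lemma onThirdQubit_add (φ χ : Fin 2 → Fin 2 → Fin 2 → ℂ) :
    onThirdQubit π (φ + χ) = onThirdQubit π φ + onThirdQubit π χ := by
  funext i j k
  simp only [onThirdQubit, Pi.add_apply, mul_add, Finset.sum_add_distrib]

lemma onThirdQubit_sub (φ χ : Fin 2 → Fin 2 → Fin 2 → ℂ) :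
    onThirdQubit π (φ - χ) = onThirdQubit π φ - onThirdQubit π χ := by
  funext i j k
  simp only [onThirdQubit, Pi.sub_apply, mul_sub, Finset.sum_sub_distrib]

lemma onThirdQubit_ket3q_apply (a b c i j k : Fin 2) :
    onThirdQubit π (ket3q a b c) i j k = if i = a ∧ j = b then π k c else 0 := by
  simp only [onThirdQubit, ket3q, ite_and, mul_ite, mul_one, mul_zero, Finset.sum_ite_irrel,
    Finset.sum_const_zero, Finset.sum_ite_eq', Finset.mem_univ, if_true]

lemma ip3q_ket3q_onThirdQubit_ket3q (a b c a' b' c' : Fin 2) :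
    ip3q (ket3q a b c) (onThirdQubit π (ket3q a' b' c')) =
      if a = a' ∧ b = b' then π c c' else 0 := by
  rw [ip3q_ket3q_left, onThirdQubit_ket3q_apply]

lemma ip3q_ghz_zero_onThirdQubit_ghz_one :
    ip3q (ghz 0) (onThirdQubit π (ghz 1)) = π 0 0 - π 1 1 := by
  simp [ghz, ip3q_add_left, onThirdQubit_sub, ip3q_sub_right, ip3q_ket3q_onThirdQubit_ket3q]

lemma ip3q_ghz_zero_onThirdQubit_ghz_two :
    ip3q (ghz 0) (onThirdQubit π (ghz 2)) = π 0 1 + π 1 0 := by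
  simp [ghz, ip3q_add_left, onThirdQubit_add, ip3q_add_right, ip3q_ket3q_onThirdQubit_ket3q]

lemma ip3q_ghz_zero_onThirdQubit_ghz_three :
    ip3q (ghz 0) (onThirdQubit π (ghz 3)) = π 0 1 - π 1 0 := by
  simp [ghz, ip3q_add_left, onThirdQubit_sub, ip3q_sub_right, ip3q_ket3q_onThirdQubit_ket3q]

end OnThirdQubit

lemma Matrix.eq_smul_one_of_fin_two {R : Type*} [Semiring R] (A : Matrix (Fin 2) (Fin 2) R)
    (hdiag : A 0 0 = A 1 1) (h01 : A 0 1 = 0) (h10 : A 1 0 = 0) : A = A 0 0 • 1 := by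
  ext i j
  fin_cases i <;> fin_cases j <;> simp [hdiag, h01, h10]

theorem ghz_basis_locally_irreducible_general (π : Matrix (Fin 2) (Fin 2) ℂ)
    (h : ∀ x y : Fin 8, x ≠ y →
      (∑ i, ∑ j, ∑ k, star (ghz x i j k) * (∑ k', π k k' * ghz y i j k')) = 0) :
    ∃ c : ℂ, π = c • (1 : Matrix (Fin 2) (Fin 2) ℂ) := by
  have h01 : π 0 0 - π 1 1 = 0 :=
    ip3q_ghz_zero_onThirdQubit_ghz_one π ▸ h 0 1 (by decide)
  have h02 : π 0 1 + π 1 0 = 0 :=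
    ip3q_ghz_zero_onThirdQubit_ghz_two π ▸ h 0 2 (by decide)
  have h03 : π 0 1 - π 1 0 = 0 :=
    ip3q_ghz_zero_onThirdQubit_ghz_three π ▸ h 0 3 (by decide)
  exact ⟨π 0 0, π.eq_smul_one_of_fin_two (by linear_combination h01)
    (by linear_combination (h02 + h03) / 2) (by linear_combination (h02 - h03) / 2)⟩

/-- Any 2×2 PSD matrix `π` acting on the third qubit that preserves the pairwise
orthogonality of the eight GHZ-basis states is a scalar multiple of the identity. -/
theorem ghz_basis_locally_irreducible (π : Matrix (Fin 2) (Fin 2) ℂ)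
    (hπ : π.PosSemidef)
    (h : ∀ x y : Fin 8, x ≠ y →
      (∑ i, ∑ j, ∑ k, star (ghz x i j k) * (∑ k', π k k' * ghz y i j k')) = 0) :
    ∃ c : ℂ, π = c • (1 : Matrix (Fin 2) (Fin 2) ℂ) :=
  ghz_basis_locally_irreducible_general π h
end
end

section
/- Any 3×3 positive semidefinite matrix π satisfying ⟨ψ_i|(π⊗I⊗I)|ψ_j⟩ = 0 for all distinct pairs from the twelve product states |1⟩|2⟩|1±2⟩, |1⟩|3⟩|1±3⟩, |2⟩|1±2⟩|1⟩, |3⟩|1±3⟩|1⟩, |1±2⟩|1⟩|2⟩, |1±3⟩|1⟩|3⟩ on ℂ³⊗ℂ³⊗ℂ³ is a scalar multiple of the 3×3 identity. -/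
open scoped BigOperators ComplexOrder

noncomputable section

def e3 (i : Fin 3) : Fin 3 → ℂ := fun j => if j = i then 1 else 0

def tp3 (a b c : Fin 3 → ℂ) : Fin 3 → Fin 3 → Fin 3 → ℂ := fun i j k => a i * b j * c k

def ip3 (ψ φ : Fin 3 → Fin 3 → Fin 3 → ℂ) : ℂ := ∑ i, ∑ j, ∑ k, star (ψ i j k) * φ i j k

def states12 : Fin 12 → (Fin 3 → Fin 3 → Fin 3 → ℂ) :=
  ![tp3 (e3 0) (e3 1) (e3 0 + e3 1),
  tp3 (e3 0) (e3 1) (e3 0 - e3 1),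
  tp3 (e3 0) (e3 2) (e3 0 + e3 2),
  tp3 (e3 0) (e3 2) (e3 0 - e3 2),
  tp3 (e3 1) (e3 0 + e3 1) (e3 0),
  tp3 (e3 1) (e3 0 - e3 1) (e3 0),
  tp3 (e3 2) (e3 0 + e3 2) (e3 0),
  tp3 (e3 2) (e3 0 - e3 2) (e3 0),
  tp3 (e3 0 + e3 1) (e3 0) (e3 1),
  tp3 (e3 0 - e3 1) (e3 0) (e3 1),
  tp3 (e3 0 + e3 2) (e3 0) (e3 2),
  tp3 (e3 0 - e3 2) (e3 0) (e3 2)]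

def act1 (π : Matrix (Fin 3) (Fin 3) ℂ) (ψ : Fin 3 → Fin 3 → Fin 3 → ℂ) :
    Fin 3 → Fin 3 → Fin 3 → ℂ :=
  fun i j k => ∑ i', π i i' * ψ i' j k

end

/-!
The matrix element factorises on product states as `⟨a|π|a'⟩⟨b|b'⟩⟨c|c'⟩`. For `k = 2, 3` the
second and third factors of `|1⟩|k⟩|1+k⟩` and `|k⟩|1+k⟩|1⟩` overlap with amplitude `1`, as do
those of `|2⟩|1+2⟩|1⟩` and `|3⟩|1+3⟩|1⟩`; orthogonality of these pairs kills every off-diagonal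
entry of `π`. Then `|1+k⟩|1⟩|k⟩ ⊥ |1-k⟩|1⟩|k⟩` gives `0 = ⟨1+k|π|1-k⟩ = π₁₁ - πₖₖ`.
(The basis vector `|i⟩` is `e3 (i - 1)`.)
-/

open Matrix

@[simp]
theorem ip3_tp3_act1 (π : Matrix (Fin 3) (Fin 3) ℂ) (a b c a' b' c' : Fin 3 → ℂ) :
    ip3 (tp3 a b c) (act1 π (tp3 a' b' c')) =
      (star a ⬝ᵥ π *ᵥ a') * (star b ⬝ᵥ b') * (star c ⬝ᵥ c') := by
  simp only [ip3, act1, tp3, dotProduct, mulVec, Fin.sum_univ_three, Pi.star_apply, star_mul']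
  ring

@[simp]
theorem e3_eq_single (i : Fin 3) : e3 i = Pi.single i 1 := by
  ext j
  simp [e3, Pi.single_apply]

theorem Matrix.eq_smul_one_of_offDiag_eq_zero {n R : Type*} [DecidableEq n] [Semiring R]
    {M : Matrix n n R} {c : R} (hoff : ∀ i j, i ≠ j → M i j = 0) (hdiag : ∀ i, M i i = c) :
    M = c • 1 := by
  ext i j
  by_cases hij : i = j
  · subst hij; simp [hdiag]
  · simp [hoff i j hij, one_apply_ne hij]

section

variable {π : Matrix (Fin 3) (Fin 3) ℂ}
  (h : ∀ x y : Fin 12, x ≠ y → ip3 (states12 x) (act1 π (states12 y)) = 0)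
include h

theorem offDiag_eq_zero_of_preserves_orthogonality : ∀ i j, i ≠ j → π i j = 0 := by
  intro i j hij
  fin_cases i <;> fin_cases j <;> simp at hij
  · simpa [states12] using h 0 4 (by decide)
  · simpa [states12] using h 2 6 (by decide)
  · simpa [states12] using h 4 0 (by decide)
  · simpa [states12] using h 4 6 (by decide)
  · simpa [states12] using h 6 2 (by decide)
  · simpa [states12] using h 6 4 (by decide)

theorem diag_eq_of_preserves_orthogonality : ∀ i, π i i = π 0 0 := by
  have hoff := offDiag_eq_zero_of_preserves_orthogonality h
  have h₁₁ : π 0 0 - π 1 1 = 0 := by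
    simpa [states12, mulVec_sub, hoff 0 1, hoff 1 0] using h 8 9 (by decide)
  have h₂₂ : π 0 0 - π 2 2 = 0 := by
    simpa [states12, mulVec_sub, hoff 0 2, hoff 2 0] using h 10 11 (by decide)
  intro i
  fin_cases i
  · rfl
  · exact (sub_eq_zero.mp h₁₁).symm
  · exact (sub_eq_zero.mp h₂₂).symm

end

theorem twelve_states_first_party_trivial_general (π : Matrix (Fin 3) (Fin 3) ℂ)
    (h : ∀ x y : Fin 12, x ≠ y → ip3 (states12 x) (act1 π (states12 y)) = 0) :
    ∃ c : ℂ, π = c • (1 : Matrix (Fin 3) (Fin 3) ℂ) :=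
  ⟨π 0 0, eq_smul_one_of_offDiag_eq_zero (offDiag_eq_zero_of_preserves_orthogonality h)
    (diag_eq_of_preserves_orthogonality h)⟩

/-- Any 3×3 PSD matrix acting on the first factor that preserves the pairwise
orthogonality of the twelve product states is a scalar multiple of the identity. -/
theorem twelve_states_first_party_trivial (π : Matrix (Fin 3) (Fin 3) ℂ)
    (hπ : π.PosSemidef)
    (h : ∀ x y : Fin 12, x ≠ y → ip3 (states12 x) (act1 π (states12 y)) = 0) :
    ∃ c : ℂ, π = c • (1 : Matrix (Fin 3) (Fin 3) ℂ) :=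
  twelve_states_first_party_trivial_general π h
end

section
/- Any 4×4 positive semidefinite matrix π satisfying ⟨ψ_i|(π⊗I₄⊗I₄)|ψ_j⟩ = 0 for all distinct pairs among the eighteen product states |1⟩|2⟩|1±2⟩, |1⟩|3⟩|1±3⟩, |1⟩|4⟩|1±4⟩, |2⟩|1±2⟩|1⟩, |3⟩|1±3⟩|1⟩, |4⟩|1±4⟩|1⟩, |1±2⟩|1⟩|2⟩, |1±3⟩|1⟩|3⟩, |1±4⟩|1⟩|4⟩ on ℂ⁴⊗ℂ⁴⊗ℂ⁴ is a scalar multiple of the 4×4 identity. -/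
open scoped BigOperators ComplexOrder

noncomputable section

def e4 (i : Fin 4) : Fin 4 → ℂ := fun j => if j = i then 1 else 0

def tp4 (a b c : Fin 4 → ℂ) : Fin 4 → Fin 4 → Fin 4 → ℂ := fun i j k => a i * b j * c k

def ip4 (ψ φ : Fin 4 → Fin 4 → Fin 4 → ℂ) : ℂ := ∑ i, ∑ j, ∑ k, star (ψ i j k) * φ i j k

def states18 : Fin 18 → (Fin 4 → Fin 4 → Fin 4 → ℂ) :=
  ![tp4 (e4 0) (e4 1) (e4 0 + e4 1),
  tp4 (e4 0) (e4 1) (e4 0 - e4 1),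
  tp4 (e4 0) (e4 2) (e4 0 + e4 2),
  tp4 (e4 0) (e4 2) (e4 0 - e4 2),
  tp4 (e4 0) (e4 3) (e4 0 + e4 3),
  tp4 (e4 0) (e4 3) (e4 0 - e4 3),
  tp4 (e4 1) (e4 0 + e4 1) (e4 0),
  tp4 (e4 1) (e4 0 - e4 1) (e4 0),
  tp4 (e4 2) (e4 0 + e4 2) (e4 0),
  tp4 (e4 2) (e4 0 - e4 2) (e4 0),
  tp4 (e4 3) (e4 0 + e4 3) (e4 0),
  tp4 (e4 3) (e4 0 - e4 3) (e4 0),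
  tp4 (e4 0 + e4 1) (e4 0) (e4 1),
  tp4 (e4 0 - e4 1) (e4 0) (e4 1),
  tp4 (e4 0 + e4 2) (e4 0) (e4 2),
  tp4 (e4 0 - e4 2) (e4 0) (e4 2),
  tp4 (e4 0 + e4 3) (e4 0) (e4 3),
  tp4 (e4 0 - e4 3) (e4 0) (e4 3)]

def act1q (π : Matrix (Fin 4) (Fin 4) ℂ) (ψ : Fin 4 → Fin 4 → Fin 4 → ℂ) :
    Fin 4 → Fin 4 → Fin 4 → ℂ :=
  fun i j k => ∑ i', π i i' * ψ i' j k

/-!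
The amplitude of π ⊗ 1 ⊗ 1 between product states factorises as ⟨a|π|a'⟩⟨b|b'⟩⟨c|c'⟩.
Writing e₀, …, e₃ for |1⟩, …, |4⟩, the states eₖ ⊗ (e₀ + eₖ) ⊗ e₀ (k ≠ 0) pairwise, and each
with e₀ ⊗ eₖ ⊗ (e₀ + eₖ), have overlap 1 in the last two factors, so every off-diagonal entry
of π vanishes; the pair (e₀ ± eₖ) ⊗ e₀ ⊗ eₖ then gives π₀₀ - πₖₖ = π₀ₖ - πₖ₀ = 0.
-/

open Matrix

@[simp]
lemma e4_eq_single (i : Fin 4) : e4 i = Pi.single i 1 := by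
  ext j
  simp [e4, Pi.single_apply]

@[simp]
lemma ip4_tp4_act1q_tp4 (π : Matrix (Fin 4) (Fin 4) ℂ) (a b c a' b' c' : Fin 4 → ℂ) :
    ip4 (tp4 a b c) (act1q π (tp4 a' b' c')) =
      (star a ⬝ᵥ π *ᵥ a') * (star b ⬝ᵥ b') * (star c ⬝ᵥ c') := by
  simp only [ip4, act1q, tp4, dotProduct, mulVec, Finset.sum_mul_sum, Pi.star_apply, star_mul']
  refine Finset.sum_congr rfl fun x _ => ?_
  rw [Finset.sum_comm]
  refine Finset.sum_congr rfl fun z _ => ?_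
  rw [Finset.sum_mul]
  refine Finset.sum_congr rfl fun y _ => ?_
  simp only [Finset.mul_sum, Finset.sum_mul]
  exact Finset.sum_congr rfl fun i _ => by ring

def OrthogonalOnStates18 (π : Matrix (Fin 4) (Fin 4) ℂ) : Prop :=
  ∀ x y : Fin 18, x ≠ y → ip4 (states18 x) (act1q π (states18 y)) = 0

namespace OrthogonalOnStates18

variable {π : Matrix (Fin 4) (Fin 4) ℂ}

theorem isDiag (h : OrthogonalOnStates18 π) : π.IsDiag := by
  intro i j hij
  fin_cases i <;> fin_cases j <;> simp only [ne_eq, not_true_eq_false] at hij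
  · simpa [states18] using h 0 6 (by decide)
  · simpa [states18] using h 2 8 (by decide)
  · simpa [states18] using h 4 10 (by decide)
  · simpa [states18] using h 6 0 (by decide)
  · simpa [states18] using h 6 8 (by decide)
  · simpa [states18] using h 6 10 (by decide)
  · simpa [states18] using h 8 2 (by decide)
  · simpa [states18] using h 8 6 (by decide)
  · simpa [states18] using h 8 10 (by decide)
  · simpa [states18] using h 10 4 (by decide)
  · simpa [states18] using h 10 6 (by decide)
  · simpa [states18] using h 10 8 (by decide)

theorem apply_self_of_states18_eq (h : OrthogonalOnStates18 π) {k : Fin 4} (hk : k ≠ 0)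
    {x y : Fin 18} (hxy : x ≠ y) (hx : states18 x = tp4 (e4 0 + e4 k) (e4 0) (e4 k))
    (hy : states18 y = tp4 (e4 0 - e4 k) (e4 0) (e4 k)) : π k k = π 0 0 := by
  have hxy := h x y hxy
  simp [hx, hy, mulVec_sub, h.isDiag hk, h.isDiag hk.symm] at hxy
  linear_combination -hxy

theorem apply_self (h : OrthogonalOnStates18 π) (i : Fin 4) : π i i = π 0 0 := by
  fin_cases i
  · rfl
  · exact h.apply_self_of_states18_eq (by decide) (x := 12) (y := 13) (by decide) rfl rfl
  · exact h.apply_self_of_states18_eq (by decide) (x := 14) (y := 15) (by decide) rfl rfl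
  · exact h.apply_self_of_states18_eq (by decide) (x := 16) (y := 17) (by decide) rfl rfl

end OrthogonalOnStates18

theorem eighteen_states_first_party_trivial_general (π : Matrix (Fin 4) (Fin 4) ℂ)
    (h : ∀ x y : Fin 18, x ≠ y → ip4 (states18 x) (act1q π (states18 y)) = 0) :
    ∃ c : ℂ, π = c • (1 : Matrix (Fin 4) (Fin 4) ℂ) := by
  have horth : OrthogonalOnStates18 π := h
  refine ⟨π 0 0, ?_⟩
  calc π = diagonal π.diag := horth.isDiag.diagonal_diag.symm
    _ = diagonal fun _ => π 0 0 := congrArg diagonal (funext horth.apply_self)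
    _ = π 0 0 • 1 := (smul_one_eq_diagonal _).symm

/-- Any 4×4 PSD matrix acting on the first factor preserving the pairwise
orthogonality of the eighteen product states is a scalar multiple of the identity. -/
theorem eighteen_states_first_party_trivial (π : Matrix (Fin 4) (Fin 4) ℂ)
    (hπ : π.PosSemidef)
    (h : ∀ x y : Fin 18, x ≠ y → ip4 (states18 x) (act1q π (states18 y)) = 0) :
    ∃ c : ℂ, π = c • (1 : Matrix (Fin 4) (Fin 4) ℂ) :=
  eighteen_states_first_party_trivial_general π h
end
end
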